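/- arXiv:2512.00886 — 9 statements merged into one kernel-verified Lean document; each statement's English description precedes it below -/
import Mathlib

section
/- Let A be a commutative ring, I a nilpotent ideal of A, B a formally étale commutative A-algebra and B′ a commutative A-algebra that is flat as an A-module. Then every A/I-algebra isomorphism B/IB ≅ B′/IB′ lifts to a unique A-algebra homomorphism B → B′ inducing it modulo I, and this A-algebra homomorphism is an isomorphism. -/
universe u

/-! Formal étaleness lifts `e ∘ mk : B → B'/IB'` uniquely along the nilpotent ideal `IB'`. For any
such lift `f`, Nakayama's lemma for the nilpotent ideal `I` upgrades surjectivity of `f` mod `I` to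
surjectivity of `f`. Flatness of `B'` then gives `ker f ∩ IB = I • ker f`, and `ker f ⊆ IB` because
`e` is injective, so Nakayama again gives `ker f = 0`. -/

namespace Submodule

variable {R M : Type*} [CommSemiring R] [AddCommMonoid M] [Module R M] {I : Ideal R}

theorem le_pow_smul_of_le_smul {N : Submodule R M} (h : N ≤ I • N) (n : ℕ) : N ≤ I ^ n • N := by
  induction n with
  | zero => simp
  | succ n ih =>
    calc N ≤ I • N := h
      _ ≤ I • I ^ n • N := smul_mono_right I ih
      _ = I ^ (n + 1) • N := by rw [pow_succ', mul_smul]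

theorem eq_bot_of_le_smul_of_isNilpotent (hI : IsNilpotent I) {N : Submodule R M}
    (h : N ≤ I • N) : N = ⊥ := by
  obtain ⟨n, hn⟩ := hI
  simpa [hn] using le_pow_smul_of_le_smul h n

end Submodule

theorem Ideal.mem_smul_top_iff_mk_eq_zero {R S : Type*} [CommSemiring R] [CommRing S] [Algebra R S]
    (I : Ideal R) (x : S) :
    x ∈ I • (⊤ : Submodule R S) ↔ Ideal.Quotient.mk (I.map (algebraMap R S)) x = 0 := by
  rw [Ideal.smul_top_eq_map, Submodule.restrictScalars_mem, Ideal.Quotient.eq_zero_iff_mem]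

namespace LinearMap

variable {R M N : Type*} [CommRing R] [AddCommGroup M] [Module R M] [AddCommGroup N] [Module R N]
  {I : Ideal R}

theorem surjective_of_range_sup_smul_top_eq_top (hI : IsNilpotent I) {f : M →ₗ[R] N}
    (h : range f ⊔ I • ⊤ = ⊤) : Function.Surjective f := by
  have htop : (⊤ : Submodule R (N ⧸ range f)) ≤ I • ⊤ := by
    rw [← Submodule.map_mkQ_eq_top, Submodule.map_smul'', Submodule.map_top,
      Submodule.range_mkQ] at h
    exact h.ge
  rw [← range_eq_top, ← Submodule.Quotient.subsingleton_iff, ← Submodule.subsingleton_iff R,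
    ← subsingleton_iff_bot_eq_top]
  exact (Submodule.eq_bot_of_le_smul_of_isNilpotent hI htop).symm

theorem injective_of_ker_le_smul_top [Module.Flat R N] (hI : IsNilpotent I) {f : M →ₗ[R] N}
    (hf : Function.Surjective f) (h : ker f ≤ I • ⊤) : Function.Injective f := by
  refine ker_eq_bot.mp (Submodule.eq_bot_of_le_smul_of_isNilpotent hI ?_)
  rw [← ker_inf_smul_top_eq_smul_of_flat I f hf]
  exact le_inf le_rfl h

end LinearMap

/-- Let `A` be a commutative ring, `I` a nilpotent ideal of `A`,
`B` a formally étale commutative `A`-algebra and `B'` a commutative `A`-algebra that is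
flat as an `A`-module. Then every `A/I`-algebra isomorphism `B/IB ≅ B'/IB'` lifts to a
unique `A`-algebra homomorphism `B → B'` inducing it modulo `I`, and this `A`-algebra
homomorphism is an isomorphism. -/
theorem formallyEtale_lift_iso_of_nilpotent
    (A B B' : Type u) [CommRing A] [CommRing B] [CommRing B']
    [Algebra A B] [Algebra A B'] (I : Ideal A) (hI : IsNilpotent I)
    [Algebra.FormallyEtale A B] [Module.Flat A B']
    (e : (B ⧸ Ideal.map (algebraMap A B) I) ≃ₐ[A] (B' ⧸ Ideal.map (algebraMap A B') I)) :
    (∃! f : B →ₐ[A] B',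
        (Ideal.Quotient.mkₐ A (Ideal.map (algebraMap A B') I)).comp f =
          (e.toAlgHom).comp (Ideal.Quotient.mkₐ A (Ideal.map (algebraMap A B) I))) ∧
    ∀ f : B →ₐ[A] B',
      (Ideal.Quotient.mkₐ A (Ideal.map (algebraMap A B') I)).comp f =
          (e.toAlgHom).comp (Ideal.Quotient.mkₐ A (Ideal.map (algebraMap A B) I)) →
        Function.Bijective f := by
  have hIB' : IsNilpotent (I.map (algebraMap A B')) := hI.map (Ideal.mapHom (algebraMap A B'))
  refine ⟨⟨Algebra.FormallySmooth.lift _ hIB' _, Algebra.FormallySmooth.comp_lift _ hIB' _,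
    fun f hf ↦ Algebra.FormallyUnramified.lift_unique _ hIB' _ _
      (hf.trans (Algebra.FormallySmooth.comp_lift _ hIB' _).symm)⟩, fun f hf ↦ ?_⟩
  have hmod (b : B) : Ideal.Quotient.mk _ (f b) = e (Ideal.Quotient.mk _ b) :=
    AlgHom.congr_fun hf b
  have hsurj : Function.Surjective f := by
    refine f.toLinearMap.surjective_of_range_sup_smul_top_eq_top hI (eq_top_iff.mpr fun y _ ↦ ?_)
    obtain ⟨b, hb⟩ := (e.surjective.comp Ideal.Quotient.mk_surjective) (Ideal.Quotient.mk _ y)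
    have hyb : y - f b ∈ I • (⊤ : Submodule A B') := by
      rw [Ideal.mem_smul_top_iff_mk_eq_zero, map_sub, hmod, ← hb, Function.comp_apply, sub_self]
    exact Submodule.mem_sup.mpr ⟨f b, ⟨b, rfl⟩, y - f b, hyb, add_sub_cancel _ _⟩
  refine ⟨f.toLinearMap.injective_of_ker_le_smul_top hI hsurj fun b hb ↦ ?_, hsurj⟩
  rw [Ideal.mem_smul_top_iff_mk_eq_zero]
  apply e.injective
  rw [← hmod, show f b = 0 from hb, map_zero, map_zero]
end

section
/- Let A be a commutative ring, I a nilpotent ideal of A, and f : M → N a homomorphism of A-modules with N flat. If the induced map M/IM → N/IN is bijective, then f is bijective. -/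
/-!
Surjectivity and injectivity both come from Nakayama's lemma for a nilpotent ideal, which needs no
finiteness: `P ≤ Q ⊔ I • P` iterates to `P ≤ Q ⊔ Iⁿ • P = Q`. Bijectivity mod `I` gives
`range f ⊔ I • N = ⊤` and `ker f ≤ I • M`; flatness of `N` then gives `ker f ⊓ I • M = I • ker f`,
so `ker f ≤ I • ker f`.
-/

universe u v

namespace Submodule

section Nilpotent

variable {R M : Type*} [CommRing R] [AddCommGroup M] [Module R M]

theorem le_sup_pow_smul_of_le_sup_smul {I : Ideal R} {P Q : Submodule R M} (h : P ≤ Q ⊔ I • P) :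
    ∀ k : ℕ, P ≤ Q ⊔ I ^ k • P
  | 0 => by simp
  | k + 1 =>
    calc P ≤ Q ⊔ I • P := h
      _ ≤ Q ⊔ I • (Q ⊔ I ^ k • P) := sup_le_sup_left (smul_mono le_rfl
          (le_sup_pow_smul_of_le_sup_smul h k)) _
      _ = Q ⊔ I • Q ⊔ I ^ (k + 1) • P := by rw [smul_sup, sup_assoc, pow_succ', Submodule.mul_smul]
      _ ≤ Q ⊔ I ^ (k + 1) • P := sup_le_sup_right (sup_le le_rfl smul_le_right) _

theorem le_of_le_sup_smul_of_isNilpotent {I : Ideal R} (hI : IsNilpotent I)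
    {P Q : Submodule R M} (h : P ≤ Q ⊔ I • P) : P ≤ Q := by
  obtain ⟨n, hn⟩ := hI
  simpa [hn] using le_sup_pow_smul_of_le_sup_smul h n

end Nilpotent

section Quotient

variable {R M N : Type*} [Ring R] [AddCommGroup M] [AddCommGroup N] [Module R M] [Module R N]
  {p : Submodule R M} {q : Submodule R N} {f : M →ₗ[R] N} {h : p ≤ q.comap f}

theorem range_sup_eq_top_of_surjective_mapQ (hsurj : Function.Surjective (p.mapQ q f h)) :
    LinearMap.range f ⊔ q = ⊤ := by
  rw [sup_comm, ← map_mkQ_eq_top, ← LinearMap.range_comp, ← mapQ_mkQ p q f (h := h),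
    LinearMap.range_comp, LinearMap.range_eq_top.2 (mkQ_surjective p), Submodule.map_top,
    LinearMap.range_eq_top.2 hsurj]

theorem ker_le_of_injective_mapQ (hinj : Function.Injective (p.mapQ q f h)) :
    LinearMap.ker f ≤ p := by
  intro x hx
  rw [← Quotient.mk_eq_zero p, ← hinj.eq_iff, mapQ_apply, map_zero, LinearMap.mem_ker.1 hx,
    Quotient.mk_zero]

end Quotient

end Submodule

/-- Let `A` be a commutative ring, `I` a nilpotent ideal of `A`, and
`f : M → N` a homomorphism of `A`-modules with `N` flat. If the induced map
`M/IM → N/IN` is bijective, then `f` is bijective. -/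
theorem bijective_of_bijective_mod_nilpotent
    (A : Type u) [CommRing A] (M N : Type v) [AddCommGroup M] [AddCommGroup N]
    [Module A M] [Module A N] [Module.Flat A N]
    (I : Ideal A) (hI : IsNilpotent I) (f : M →ₗ[A] N)
    (hmod : Function.Bijective
      (Submodule.mapQ (I • (⊤ : Submodule A M)) (I • (⊤ : Submodule A N)) f
        (by
          rw [← Submodule.map_le_iff_le_comap, Submodule.map_smul'']
          exact Submodule.smul_mono le_rfl le_top))) :
    Function.Bijective f := by
  have hsurj : Function.Surjective f := by
    rw [← LinearMap.range_eq_top, eq_top_iff]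
    exact Submodule.le_of_le_sup_smul_of_isNilpotent hI
      (Submodule.range_sup_eq_top_of_surjective_mapQ hmod.2).ge
  have hker : LinearMap.ker f ≤ I • LinearMap.ker f := by
    rw [← LinearMap.ker_inf_smul_top_eq_smul_of_flat I f hsurj]
    exact le_inf le_rfl (Submodule.ker_le_of_injective_mapQ hmod.1)
  refine ⟨?_, hsurj⟩
  rw [← LinearMap.ker_eq_bot, eq_bot_iff]
  exact Submodule.le_of_le_sup_smul_of_isNilpotent hI (by rwa [bot_sup_eq])
end

section
/- Let A be a commutative ring and I a nilpotent ideal of A such that the quotient map A → A/I admits a ring-homomorphism section s : A/I → A. Let R be a formally étale commutative A/I-algebra. Then B := R ⊗_{A/I} A, the base change of R along s, is a formally étale A-algebra with B ⊗_A A/I ≅ R, and B is unique up to A-algebra isomorphism among formally étale A-algebras with this property. Moreover, if R is flat over A/I, then B is flat over A and is unique up to A-algebra isomorphism among flat A-algebras B′ equipped with an A/I-algebra isomorphism B′ ⊗_A A/I ≅ R. -/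
universe u

open scoped TensorProduct

/-- A *lift* of an `A/I`-algebra `R` along `A → A/I`: a commutative `A`-algebra `B`
together with an isomorphism `B ⊗_A A/I ≅ B/IB ≅ R` (an `A`-algebra isomorphism, which is
the same thing as an `A/I`-algebra isomorphism). -/
structure AlgebraLift (A : Type u) [CommRing A] (I : Ideal A) (R : Type u) [CommRing R]
    [Algebra A R] : Type (u + 1) where
  carrier : Type u
  [commRing : CommRing carrier]
  [algebra : Algebra A carrier]
  reduction : (carrier ⧸ Ideal.map (algebraMap A carrier) I) ≃ₐ[A] R

attribute [instance] AlgebraLift.commRing AlgebraLift.algebra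

/-!
The base change `B = A ⊗[A ⧸ I] R` along the section reduces to `R` modulo `I`: by right
exactness of `⊗`, the kernel of `a ⊗ r ↦ ā r` is `I B`. Formal étaleness and flatness are stable
under base change. Two formally étale `A`-algebras that agree modulo the nilpotent ideal `I` are
isomorphic: lift the isomorphism and its inverse by formal smoothness; the composites are
identities by formal unramifiedness. For a flat lift `L`, formal smoothness of `R` lifts
`R ≃ L ⧸ I L` to `R → L`, hence gives `B → L` inducing an isomorphism modulo `I`. Such a map is
onto by Nakayama for nilpotent ideals, and flatness of `L` gives `ker ∩ I B = I ker`, so the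
kernel vanishes by Nakayama again.
-/

open LinearMap TensorProduct

theorem IsScalarTower.of_section {S A R : Type*} [CommSemiring S] [CommSemiring A] [Semiring R]
    [Algebra S A] [Algebra A S] [Algebra S R] [Algebra A R] [IsScalarTower S A S]
    [IsScalarTower A S R] : IsScalarTower S A R :=
  .of_algebraMap_eq fun c => by
    rw [IsScalarTower.algebraMap_apply A S R, ← IsScalarTower.algebraMap_apply S A S,
      Algebra.algebraMap_self_apply]

theorem Ideal.isNilpotent_map {R S : Type*} [CommSemiring R] [CommSemiring S] {J : Ideal R}
    (hJ : IsNilpotent J) (f : R →+* S) : IsNilpotent (J.map f) := by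
  obtain ⟨n, hn⟩ := hJ
  exact ⟨n, by simp [← Ideal.map_pow, hn]⟩

section Module

variable {A M N : Type*} [CommRing A] [AddCommGroup M] [Module A M] [AddCommGroup N] [Module A N]

theorem Submodule.le_of_le_sup_smul_of_isNilpotent_s4 {I : Ideal A} (hI : IsNilpotent I)
    {P Q : Submodule A M} (h : P ≤ Q ⊔ I • P) : P ≤ Q := by
  have key : ∀ k : ℕ, P ≤ Q ⊔ I ^ k • P := by
    intro k
    induction k with
    | zero => simp
    | succ k ih =>
      calc P ≤ Q ⊔ I ^ k • P := ih
        _ ≤ Q ⊔ I ^ k • (Q ⊔ I • P) := sup_le_sup_left (smul_mono_right _ h) _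
        _ = Q ⊔ I ^ k • Q ⊔ I ^ (k + 1) • P := by
          rw [Submodule.smul_sup, ← Submodule.mul_smul, ← pow_succ, sup_assoc]
        _ ≤ Q ⊔ I ^ (k + 1) • P := sup_le_sup_right (sup_le le_rfl Submodule.smul_le_right) _
  obtain ⟨n, hn⟩ := hI
  simpa [hn] using key n

theorem TensorProduct.lid_rTensor_subtype_lTensor {P : Type*} [AddCommGroup P] [Module A P]
    (I : Ideal A) (g : M →ₗ[A] P) (w : I ⊗[A] M) :
    TensorProduct.lid A P (rTensor P I.subtype (lTensor I g w)) =
      g (TensorProduct.lid A M (rTensor M I.subtype w)) := by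
  induction w with
  | zero => simp
  | tmul i m => simp
  | add w w' hw hw' => simp only [map_add, hw, hw']

theorem LinearMap.ker_inf_smul_top_le_smul_ker [Module.Flat A N] (I : Ideal A) {f : M →ₗ[A] N}
    (hf : Function.Surjective f) : ker f ⊓ I • ⊤ ≤ I • ker f := by
  -- Flatness of `N` makes `I ⊗ N → N` injective, so a preimage in `I ⊗ M` of `x` is killed
  -- by `I ⊗ f` and therefore comes from `I ⊗ ker f`.
  rintro x ⟨hx, hxI⟩
  rw [← Submodule.map_range_rTensor_subtype_lid] at hxI
  obtain ⟨_, ⟨u, rfl⟩, rfl⟩ := hxI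
  have hu : rTensor N I.subtype (lTensor I f u) = 0 := by
    apply (TensorProduct.lid A N).injective
    rw [lid_rTensor_subtype_lTensor, map_zero]
    exact hx
  obtain ⟨v, rfl⟩ := (lTensor_exact I (exact_subtype_ker_map f) hf u).mp <|
    Module.Flat.rTensor_preserves_injective_linearMap _ I.injective_subtype
      (hu.trans (map_zero _).symm)
  rw [LinearEquiv.coe_coe, lid_rTensor_subtype_lTensor]
  have hv : TensorProduct.lid A _ (rTensor _ I.subtype v) ∈ I • (⊤ : Submodule A (ker f)) := by
    rw [← Submodule.map_range_rTensor_subtype_lid]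
    exact Submodule.mem_map_of_mem (mem_range_self _ v)
  simpa only [Submodule.map_smul'', Submodule.map_subtype_top] using
    Submodule.mem_map_of_mem (f := (ker f).subtype) hv

theorem LinearMap.bijective_of_flat_of_isNilpotent [Module.Flat A N] {I : Ideal A}
    (hI : IsNilpotent I) (f : M →ₗ[A] N) (hker : ker f ≤ I • ⊤) (hrange : range f ⊔ I • ⊤ = ⊤) :
    Function.Bijective f := by
  have hsurj : Function.Surjective f :=
    range_eq_top.mp <| top_le_iff.mp <| Submodule.le_of_le_sup_smul_of_isNilpotent_s4 hI hrange.ge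
  refine ⟨ker_eq_bot.mp <| le_bot_iff.mp <|
    Submodule.le_of_le_sup_smul_of_isNilpotent_s4 hI ?_, hsurj⟩
  rw [bot_sup_eq]
  exact (le_inf le_rfl hker).trans (ker_inf_smul_top_le_smul_ker I hsurj)

end Module

section Algebra

variable {A B L : Type*} [CommRing A] [CommRing B] [CommRing L] [Algebra A B] [Algebra A L]
  {I : Ideal A}

theorem Algebra.FormallyEtale.nonempty_algEquiv_of_quotient [FormallyEtale A B]
    [FormallyEtale A L] (hI : IsNilpotent I)
    (e : (B ⧸ I.map (algebraMap A B)) ≃ₐ[A] L ⧸ I.map (algebraMap A L)) :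
    Nonempty (B ≃ₐ[A] L) := by
  have hB := Ideal.isNilpotent_map hI (algebraMap A B)
  have hL := Ideal.isNilpotent_map hI (algebraMap A L)
  let ψ := FormallySmooth.lift _ hL (e.toAlgHom.comp (Ideal.Quotient.mkₐ A _))
  let χ := FormallySmooth.lift _ hB (e.symm.toAlgHom.comp (Ideal.Quotient.mkₐ A _))
  exact ⟨.ofAlgHom ψ χ (FormallyUnramified.ext _ hL fun l => by simp [ψ, χ])
    (FormallyUnramified.ext _ hB fun b => by simp [ψ, χ])⟩

theorem AlgHom.bijective_of_flat_of_isNilpotent [Module.Flat A L] (hI : IsNilpotent I)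
    (f : B →ₐ[A] L)
    (e : (B ⧸ I.map (algebraMap A B)) ≃ₐ[A] L ⧸ I.map (algebraMap A L))
    (he : ∀ b, e (Ideal.Quotient.mk _ b) = Ideal.Quotient.mk _ (f b)) : Function.Bijective f := by
  refine f.toLinearMap.bijective_of_flat_of_isNilpotent hI (fun b hb => ?_)
    (eq_top_iff.mpr fun l _ => ?_)
  · rw [Ideal.smul_top_eq_map, Submodule.restrictScalars_mem, ← Ideal.Quotient.eq_zero_iff_mem,
      ← map_eq_zero_iff e e.injective, he]
    exact (congrArg _ hb).trans (map_zero _)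
  · obtain ⟨b, hb⟩ := (e.surjective.comp Ideal.Quotient.mk_surjective) (Ideal.Quotient.mk _ l)
    have hl : l - f b ∈ I • (⊤ : Submodule A L) := by
      rw [Ideal.smul_top_eq_map, Submodule.restrictScalars_mem, ← Ideal.Quotient.eq]
      exact hb.symm.trans (he b)
    simpa using Submodule.add_mem_sup (LinearMap.mem_range_self f.toLinearMap b) hl

end Algebra

section BaseChange

variable (A : Type*) [CommRing A] (I : Ideal A) [Algebra (A ⧸ I) A]
  (R : Type*) [CommRing R] [Algebra (A ⧸ I) R] [Algebra A R] [IsScalarTower (A ⧸ I) A R]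

noncomputable def baseChangeReduction : A ⊗[A ⧸ I] R →ₐ[A] R :=
  Algebra.TensorProduct.lift (Algebra.ofId A R) (AlgHom.id (A ⧸ I) R) fun _ _ => .all _ _

@[simp]
theorem baseChangeReduction_tmul (a : A) (r : R) :
    baseChangeReduction A I R (a ⊗ₜ r) = algebraMap A R a * r :=
  rfl

section Lift

variable {A I R} {L : Type*} [CommRing L] [Algebra A L] [Algebra (A ⧸ I) L]
  [IsScalarTower (A ⧸ I) A L] [Algebra.FormallySmooth (A ⧸ I) R] (hI : IsNilpotent I)
  (red : (L ⧸ I.map (algebraMap A L)) ≃ₐ[A] R)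

noncomputable def liftOfReduction : R →ₐ[A ⧸ I] L :=
  Algebra.FormallySmooth.liftOfSurjective (AlgHom.id (A ⧸ I) R)
    ((red.toAlgHom.comp (Ideal.Quotient.mkₐ A _)).restrictScalars (A ⧸ I))
    (red.surjective.comp Ideal.Quotient.mk_surjective) (by
      convert Ideal.isNilpotent_map hI (algebraMap A L)
      ext x
      simp [Ideal.Quotient.eq_zero_iff_mem])

theorem reduction_mk_liftOfReduction (r : R) :
    red (Ideal.Quotient.mk _ (liftOfReduction hI red r)) = r :=
  Algebra.FormallySmooth.liftOfSurjective_apply (AlgHom.id (A ⧸ I) R)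
    ((red.toAlgHom.comp (Ideal.Quotient.mkₐ A _)).restrictScalars (A ⧸ I)) _ _ r

noncomputable def baseChangeToLift : A ⊗[A ⧸ I] R →ₐ[A] L :=
  Algebra.TensorProduct.lift (Algebra.ofId A L) (liftOfReduction hI red) fun _ _ => .all _ _

theorem reduction_mk_baseChangeToLift (x : A ⊗[A ⧸ I] R) :
    red (Ideal.Quotient.mk _ (baseChangeToLift hI red x)) = baseChangeReduction A I R x := by
  induction x with
  | zero => simp
  | tmul a r => simp [baseChangeToLift, reduction_mk_liftOfReduction]
  | add x y hx hy => simp [hx, hy]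

end Lift

-- `IsScalarTower (A ⧸ I) A (A ⧸ I)` says that `A ⧸ I → A → A ⧸ I` is the identity.
variable [IsScalarTower (A ⧸ I) A (A ⧸ I)] [IsScalarTower A (A ⧸ I) R]

theorem ker_baseChangeReduction :
    RingHom.ker (baseChangeReduction A I R) = I.map (algebraMap A (A ⊗[A ⧸ I] R)) := by
  have h : (baseChangeReduction A I R).restrictScalars (A ⧸ I) =
      (Algebra.TensorProduct.lid (A ⧸ I) R).toAlgHom.comp
        (Algebra.TensorProduct.map (IsScalarTower.toAlgHom (A ⧸ I) A (A ⧸ I))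
          (AlgHom.id (A ⧸ I) R)) := by
    refine Algebra.TensorProduct.ext' fun a r => ?_
    simp [Algebra.smul_def, IsScalarTower.algebraMap_apply A (A ⧸ I) R]
  calc RingHom.ker (baseChangeReduction A I R)
      = RingHom.ker ((Algebra.TensorProduct.lid (A ⧸ I) R).toRingHom.comp
          (Algebra.TensorProduct.map (IsScalarTower.toAlgHom (A ⧸ I) A (A ⧸ I))
            (AlgHom.id (A ⧸ I) R)).toRingHom) :=
        congrArg (fun f : _ →ₐ[A ⧸ I] R => RingHom.ker f) h
    _ = (RingHom.ker (algebraMap A (A ⧸ I))).map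
          (Algebra.TensorProduct.includeLeft : A →ₐ[A ⧸ I] A ⊗[A ⧸ I] R) :=
      (RingHom.ker_comp_of_injective _ (Algebra.TensorProduct.lid (A ⧸ I) R).injective).trans
        (Algebra.TensorProduct.rTensor_ker _ Ideal.Quotient.mk_surjective)
    _ = I.map (algebraMap A (A ⊗[A ⧸ I] R)) := by
      rw [Ideal.Quotient.algebraMap_eq, Ideal.mk_ker]
      rfl

noncomputable def baseChangeReductionEquiv :
    (A ⊗[A ⧸ I] R ⧸ I.map (algebraMap A (A ⊗[A ⧸ I] R))) ≃ₐ[A] R :=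
  (Ideal.quotientEquivAlgOfEq A (ker_baseChangeReduction A I R).symm).trans
    (Ideal.quotientKerAlgEquivOfSurjective fun r => ⟨1 ⊗ₜ r, by simp⟩)

@[simp]
theorem baseChangeReductionEquiv_mk (x : A ⊗[A ⧸ I] R) :
    baseChangeReductionEquiv A I R (Ideal.Quotient.mk _ x) = baseChangeReduction A I R x :=
  rfl

end BaseChange

/-- Let `A` be a commutative ring and `I` a nilpotent ideal of `A` such
that the quotient map `A → A/I` admits a ring-homomorphism section `s : A/I → A`.  Let `R`
be a formally étale commutative `A/I`-algebra.  Then `B := R ⊗_{A/I} A`, the base change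
of `R` along `s` (written below as `A ⊗[A/I] R`, with `A` an `A/I`-algebra via `s`), is a
formally étale `A`-algebra with `B ⊗_A A/I ≅ R`, and `B` is unique up to `A`-algebra
isomorphism among formally étale `A`-algebras with this property.  Moreover, if `R` is
flat over `A/I`, then `B` is flat over `A` and is unique up to `A`-algebra isomorphism
among flat `A`-algebras `B'` equipped with an `A/I`-algebra isomorphism
`B' ⊗_A A/I ≅ R`. -/
theorem kato_lift_of_nilpotent_section
    (A : Type u) [CommRing A] (I : Ideal A) (hI : IsNilpotent I)
    (s : A ⧸ I →+* A) (hs : (Ideal.Quotient.mk I).comp s = RingHom.id (A ⧸ I))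
    (R : Type u) [CommRing R] [Algebra (A ⧸ I) R] [Algebra A R]
    [IsScalarTower A (A ⧸ I) R] [Algebra.FormallyEtale (A ⧸ I) R] :
    letI : Algebra (A ⧸ I) A := s.toAlgebra
    (Algebra.FormallyEtale A (A ⊗[A ⧸ I] R) ∧
      Nonempty ((A ⊗[A ⧸ I] R ⧸ Ideal.map (algebraMap A (A ⊗[A ⧸ I] R)) I) ≃ₐ[A] R)) ∧
    (∀ L : AlgebraLift A I R, Algebra.FormallyEtale A L.carrier →
      Nonempty (L.carrier ≃ₐ[A] A ⊗[A ⧸ I] R)) ∧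
    (Module.Flat (A ⧸ I) R →
      Module.Flat A (A ⊗[A ⧸ I] R) ∧
      ∀ L : AlgebraLift A I R, Module.Flat A L.carrier →
        Nonempty (L.carrier ≃ₐ[A] A ⊗[A ⧸ I] R)) := by
  let _ : Algebra (A ⧸ I) A := s.toAlgebra
  have : IsScalarTower (A ⧸ I) A (A ⧸ I) :=
    .of_algebraMap_eq fun c => (RingHom.congr_fun hs c).symm
  have : IsScalarTower (A ⧸ I) A R := .of_section
  let red := baseChangeReductionEquiv A I R
  refine ⟨⟨inferInstance, ⟨red⟩⟩, fun L _ => ?_, fun _ => ⟨inferInstance, fun L _ => ?_⟩⟩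
  · exact Algebra.FormallyEtale.nonempty_algEquiv_of_quotient hI (L.reduction.trans red.symm)
  · let _ : Algebra (A ⧸ I) L.carrier := ((algebraMap A L.carrier).comp s).toAlgebra
    have : IsScalarTower (A ⧸ I) A L.carrier := .of_algebraMap_eq fun _ => rfl
    have hbij := (baseChangeToLift hI L.reduction).bijective_of_flat_of_isNilpotent hI
      (red.trans L.reduction.symm) fun x => by
        rw [AlgEquiv.trans_apply, baseChangeReductionEquiv_mk,
          ← reduction_mk_baseChangeToLift hI L.reduction, AlgEquiv.symm_apply_apply]
    exact ⟨(AlgEquiv.ofBijective _ hbij).symm⟩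
end

section
/- Let A be a discrete valuation ring with uniformizer π, and let B be a commutative A-algebra that is flat as an A-module, π-adically separated (⋂_{n≥0} πⁿB = 0), and such that B/πB is an integral domain. Then every unit x of the localization B[1/π] can be written x = πⁿ·u for a unique integer n ∈ ℤ and a unique unit u of B. Equivalently, there is a split short exact sequence of abelian groups 1 → B^× → B[1/π]^× → ℤ → 0, where the last map sends x = πⁿ·u to n. -/
universe u

/-!
Clearing denominators, a unit `x` of `B[1/π]` and its inverse give `b, c ∈ B` with
`b * c = π ^ N`. As `B` is `π`-adically separated, `b = π ^ i * b'` and `c = π ^ j * c'` with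
`π ∤ b'` and `π ∤ c'`; since `π` is prime, `π ∤ b' * c'`, and cancelling the regular element `π`
forces `b' * c' = 1`. Uniqueness is the same cancellation. Flatness over `A` is what makes `π`
regular on `B`, and `B/πB` being a domain is what makes it prime.
-/

open nonZeroDivisors

section SeparatedPrime

variable {B : Type*} [CommRing B] {p : B}

theorem exists_eq_pow_mul_and_not_dvd_of_iInf_span_pow_eq_bot
    (hsep : ⨅ n : ℕ, Ideal.span {p ^ n} = ⊥) {b : B} (hb : b ≠ 0) :
    ∃ i : ℕ, ∃ c : B, b = p ^ i * c ∧ ¬p ∣ c := by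
  have hfin : FiniteMultiplicity p b := by
    refine not_not.1 fun h ↦ hb ?_
    have hmem : b ∈ ⨅ n : ℕ, Ideal.span {p ^ n} := Ideal.mem_iInf.2 fun n ↦
      Ideal.mem_span_singleton.2 (FiniteMultiplicity.not_iff_forall.1 h n)
    rwa [hsep, Ideal.mem_bot] at hmem
  exact ⟨_, hfin.exists_eq_pow_mul_and_not_dvd⟩

theorem eq_of_pow_mul_eq_pow_mul_of_not_dvd (hreg : p ∈ B⁰) {m n : ℕ} {y z : B}
    (hy : ¬p ∣ y) (hz : ¬p ∣ z) (h : p ^ m * y = p ^ n * z) : m = n ∧ y = z := by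
  wlog hmn : m ≤ n generalizing m n y z
  · obtain ⟨hnm, hzy⟩ := this hz hy h.symm (Nat.le_of_not_le hmn)
    exact ⟨hnm.symm, hzy.symm⟩
  obtain ⟨d, rfl⟩ := Nat.exists_eq_add_of_le hmn
  rw [pow_add, mul_assoc, mul_cancel_left_mem_nonZeroDivisors (pow_mem hreg m)] at h
  cases d with
  | zero => simpa using h
  | succ d => exact (hy (h ▸ dvd_mul_of_dvd_left (dvd_pow_self p d.succ_ne_zero) z)).elim

theorem Prime.exists_associated_pow_of_mul_eq_pow (hp : Prime p) (hreg : p ∈ B⁰)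
    (hsep : ⨅ n : ℕ, Ideal.span {p ^ n} = ⊥) {b c : B} {n : ℕ} (h : b * c = p ^ n) :
    ∃ i : ℕ, Associated (p ^ i) b := by
  have : Nontrivial B := ⟨⟨p, 0, hp.ne_zero⟩⟩
  have hpn : p ^ n ≠ 0 := nonZeroDivisors.ne_zero (pow_mem hreg n)
  obtain ⟨i, b', rfl, hb'⟩ := exists_eq_pow_mul_and_not_dvd_of_iInf_span_pow_eq_bot hsep
    (left_ne_zero_of_mul (h ▸ hpn))
  obtain ⟨j, c', rfl, hc'⟩ := exists_eq_pow_mul_and_not_dvd_of_iInf_span_pow_eq_bot hsep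
    (right_ne_zero_of_mul (h ▸ hpn))
  have hbc : p ^ (i + j) * (b' * c') = p ^ n * 1 := by rw [mul_one, ← h]; ring
  obtain ⟨-, hbc⟩ := eq_of_pow_mul_eq_pow_mul_of_not_dvd hreg (hp.not_dvd_mul hb' hc')
    hp.not_dvd_one hbc
  exact ⟨i, Units.mkOfMulEqOne b' c' hbc, rfl⟩

variable {L : Type*} [CommRing L] [Algebra B L] [IsLocalization.Away p L]

theorem exists_zpow_mul_unitsMap_of_prime (hp : Prime p) (hreg : p ∈ B⁰)
    (hsep : ⨅ n : ℕ, Ideal.span {p ^ n} = ⊥) (x : Lˣ) :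
    ∃ n : ℤ, ∃ u : Bˣ, x = (IsLocalization.Away.algebraMap_isUnit p).unit ^ n *
      Units.map (algebraMap B L).toMonoidHom u := by
  have hinj := IsLocalization.injective L (Submonoid.powers_le.2 hreg)
  obtain ⟨k, b, hb⟩ := IsLocalization.Away.surj p (x : L)
  obtain ⟨l, c, hc⟩ := IsLocalization.Away.surj p (x⁻¹ : Lˣ).val
  have hbc : b * c = p ^ (k + l) := hinj <| by
    rw [map_mul, ← hb, ← hc, map_pow, pow_add]
    linear_combination (algebraMap B L p ^ k * algebraMap B L p ^ l) * x.mul_inv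
  obtain ⟨i, u, hu⟩ := hp.exists_associated_pow_of_mul_eq_pow hreg hsep hbc
  refine ⟨i - k, u, ?_⟩
  rw [zpow_sub, zpow_natCast, zpow_natCast, mul_right_comm, eq_mul_inv_iff_mul_eq]
  ext
  simp [hb, ← hu]

theorem zpow_mul_unitsMap_injective (hp : ¬IsUnit p) (hreg : p ∈ B⁰) {m n : ℤ} {v w : Bˣ}
    (h : (IsLocalization.Away.algebraMap_isUnit (S := L) p).unit ^ m *
        Units.map (algebraMap B L).toMonoidHom v =
      (IsLocalization.Away.algebraMap_isUnit p).unit ^ n *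
        Units.map (algebraMap B L).toMonoidHom w) :
    m = n ∧ v = w := by
  wlog hnm : n ≤ m generalizing m n v w
  · obtain ⟨hnm, hwv⟩ := this h.symm (le_of_not_ge hnm)
    exact ⟨hnm.symm, hwv.symm⟩
  have hinj := IsLocalization.injective L (Submonoid.powers_le.2 hreg)
  have hndvd (u : Bˣ) : ¬p ∣ u := fun hpu ↦ hp (isUnit_of_dvd_unit hpu u.isUnit)
  obtain ⟨d, rfl⟩ := Int.exists_add_of_le hnm
  rw [zpow_add, mul_assoc, mul_right_inj, zpow_natCast] at h
  have hB : p ^ d * (v : B) = p ^ 0 * (w : B) := hinj <| by simpa using congrArg Units.val h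
  obtain ⟨rfl, hvw⟩ := eq_of_pow_mul_eq_pow_mul_of_not_dvd hreg (hndvd v) (hndvd w) hB
  exact ⟨by simp, Units.ext hvw⟩

theorem existsUnique_zpow_mul_unitsMap_of_prime (hp : Prime p) (hreg : p ∈ B⁰)
    (hsep : ⨅ n : ℕ, Ideal.span {p ^ n} = ⊥) (x : Lˣ) :
    ∃! nu : ℤ × Bˣ, x = (IsLocalization.Away.algebraMap_isUnit p).unit ^ nu.1 *
      Units.map (algebraMap B L).toMonoidHom nu.2 := by
  obtain ⟨n, u, rfl⟩ := exists_zpow_mul_unitsMap_of_prime hp hreg hsep x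
  refine ⟨(n, u), rfl, fun ⟨m, v⟩ h ↦ ?_⟩
  obtain ⟨rfl, rfl⟩ := zpow_mul_unitsMap_injective hp.not_isUnit hreg h.symm
  rfl

end SeparatedPrime

/-- Let `A` be a discrete valuation ring with uniformizer `π`, and let `B`
be a commutative `A`-algebra that is flat as an `A`-module, `π`-adically separated
(`⋂ n, πⁿB = 0`), and such that `B/πB` is an integral domain. Then every unit `x` of the
localization `B[1/π]` can be written `x = πⁿ · u` for a unique integer `n ∈ ℤ` and a unique
unit `u` of `B`.  (This is the content of the split short exact sequence
`1 → B^× → B[1/π]^× → ℤ → 0`.) -/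
theorem exists_unique_zpow_uniformizer_factorization_units
    (A : Type u) [CommRing A] [IsDomain A] [IsDiscreteValuationRing A]
    (B : Type u) [CommRing B] [Algebra A B] [Module.Flat A B]
    (π : A) (hπ : IsLocalRing.maximalIdeal A = Ideal.span {π})
    (hsep : (⨅ n : ℕ, Ideal.span {algebraMap A B π ^ n}) = ⊥)
    [IsDomain (B ⧸ Ideal.span {algebraMap A B π})]
    (x : (Localization.Away (algebraMap A B π))ˣ) :
    ∃! nu : ℤ × Bˣ,
      x = (IsLocalization.map_units (Localization.Away (algebraMap A B π))
              (⟨algebraMap A B π, Submonoid.mem_powers _⟩ :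
                Submonoid.powers (algebraMap A B π))).unit ^ nu.1 *
            Units.map (algebraMap B (Localization.Away (algebraMap A B π))).toMonoidHom nu.2 := by
  have hπ0 : π ≠ 0 := ((IsDiscreteValuationRing.irreducible_iff_uniformizer π).2 hπ).ne_zero
  have hreg : algebraMap A B π ∈ B⁰ := isRegular_iff_mem_nonZeroDivisors.1 <|
    isLeftRegular_iff_isRegular.1 (IsSMulRegular.of_ne_zero hπ0).of_flat.isLeftRegular
  have : Nontrivial B :=
    (Ideal.Quotient.mk_surjective (I := Ideal.span {algebraMap A B π})).nontrivial
  have hp : Prime (algebraMap A B π) := (Ideal.span_singleton_prime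
    (nonZeroDivisors.ne_zero hreg)).1 ((Ideal.Quotient.isDomain_iff_prime _).1 inferInstance)
  exact existsUnique_zpow_mul_unitsMap_of_prime hp hreg hsep x
end

section
/- Let A be a discrete valuation ring with uniformizer π, and let B be a commutative A-algebra that is flat as an A-module and π-adically complete, such that B/πB is a field. Then B is an integral domain and a discrete valuation ring whose maximal ideal is πB, and the localization B[1/π] is a field, namely the fraction field of B. -/
/-!
Flatness over `A` makes `π` a nonzerodivisor on `B`, and completeness puts `πB` in the Jacobson
radical, so `B` is local with maximal ideal `πB`. Since `B` is `π`-adically separated, every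
nonzero `b` has a finite `π`-multiplicity and hence equals `πⁿ` times a unit; regularity of `π`
then makes `B` a domain with unit-times-power factorizations, i.e. a discrete valuation ring.
Inverting its uniformizer already inverts every nonzero element.
-/

universe u

open IsLocalRing

theorem FiniteMultiplicity.of_isHausdorff_span {R : Type*} [CommRing R] {ϖ b : R}
    [IsHausdorff (Ideal.span {ϖ}) R] (hb : b ≠ 0) : FiniteMultiplicity ϖ b := by
  by_contra hinf
  rw [FiniteMultiplicity.not_iff_forall] at hinf
  refine hb (IsHausdorff.haus ‹_› b fun n => ?_)
  rw [SModEq.zero, smul_eq_mul, Ideal.mul_top, Ideal.span_singleton_pow,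
    Ideal.mem_span_singleton]
  exact hinf n

namespace IsLocalRing

variable {R : Type*} [CommRing R] [IsLocalRing R] {ϖ : R}
  [IsHausdorff (Ideal.span {ϖ}) R]

theorem associated_pow_of_maximalIdeal_eq_span (hϖ : maximalIdeal R = Ideal.span {ϖ})
    {b : R} (hb : b ≠ 0) : ∃ n : ℕ, Associated (ϖ ^ n) b := by
  obtain ⟨c, hc, hϖc⟩ :=
    (FiniteMultiplicity.of_isHausdorff_span (ϖ := ϖ) hb).exists_eq_pow_mul_and_not_dvd
  have hc_unit : IsUnit c := by
    by_contra h
    rw [← mem_nonunits_iff, ← mem_maximalIdeal, hϖ, Ideal.mem_span_singleton] at h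
    exact hϖc h
  exact ⟨_, hc_unit.unit, hc.symm⟩

theorem isDomain_of_maximalIdeal_eq_span (hϖ : maximalIdeal R = Ideal.span {ϖ})
    (hreg : IsLeftRegular ϖ) : IsDomain R := by
  have : NoZeroDivisors R := by
    refine ⟨fun {a b} hab => ?_⟩
    by_contra! h
    obtain ⟨m, u, rfl⟩ := associated_pow_of_maximalIdeal_eq_span hϖ h.1
    obtain ⟨n, v, rfl⟩ := associated_pow_of_maximalIdeal_eq_span hϖ h.2
    have : ϖ ^ (m + n) * ↑(u * v) = 0 := by rw [← hab]; push_cast; ring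
    exact (u * v).ne_zero ((hreg.pow _).mul_left_eq_zero_iff.mp this)
  exact NoZeroDivisors.to_isDomain R

theorem isDiscreteValuationRing_of_maximalIdeal_eq_span [IsDomain R]
    (hϖ : maximalIdeal R = Ideal.span {ϖ}) (hϖ0 : ϖ ≠ 0) : IsDiscreteValuationRing R :=
  .ofHasUnitMulPowIrreducibleFactorization
    ⟨ϖ, IsDiscreteValuationRing.irreducible_of_span_eq_maximalIdeal ϖ hϖ0 hϖ,
      associated_pow_of_maximalIdeal_eq_span hϖ⟩

end IsLocalRing

theorem IsDiscreteValuationRing.isFractionRing_of_isLocalization_away {R : Type*} [CommRing R]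
    [IsDomain R] [IsDiscreteValuationRing R] {ϖ : R} (hϖ : Irreducible ϖ) (S : Type*)
    [CommRing S] [Algebra R S] [IsLocalization.Away ϖ S] : IsFractionRing R S := by
  refine IsLocalization.of_le (Submonoid.powers ϖ) _
    (powers_le_nonZeroDivisors_of_noZeroDivisors hϖ.ne_zero) fun r hr => ?_
  obtain ⟨n, u, rfl⟩ := eq_unit_mul_pow_irreducible (nonZeroDivisors.ne_zero hr) hϖ
  rw [map_mul, map_pow]
  exact (u.isUnit.map _).mul ((IsLocalization.Away.algebraMap_isUnit ϖ).pow n)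

/-- Let `A` be a discrete valuation ring with uniformizer `π`, and let `B`
be a commutative `A`-algebra that is flat as an `A`-module and `π`-adically complete, such
that `B/πB` is a field. Then `B` is an integral domain and a discrete valuation ring whose
maximal ideal is `πB`, and the localization `B[1/π]` is a field, namely the fraction field
of `B`. -/
theorem discreteValuationRing_of_complete_flat_field_reduction
    (A : Type u) [CommRing A] [IsDomain A] [IsDiscreteValuationRing A]
    (B : Type u) [CommRing B] [Algebra A B] [Module.Flat A B]
    (π : A) (hπ : IsLocalRing.maximalIdeal A = Ideal.span {π})
    [IsAdicComplete (Ideal.span {algebraMap A B π}) B]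
    (hfield : IsField (B ⧸ Ideal.span {algebraMap A B π})) :
    ∃ (hdom : IsDomain B) (hloc : IsLocalRing B),
      @IsDiscreteValuationRing B _ hdom ∧
      @IsLocalRing.maximalIdeal B _ hloc = Ideal.span {algebraMap A B π} ∧
      IsField (Localization.Away (algebraMap A B π)) ∧
      IsFractionRing B (Localization.Away (algebraMap A B π)) := by
  set ϖ := algebraMap A B π
  have hπ0 : π ≠ 0 := by
    rintro rfl
    exact IsDiscreteValuationRing.not_a_field A (by rw [hπ, Ideal.span_singleton_eq_bot])
  have hreg : IsLeftRegular ϖ := (IsSMulRegular.of_ne_zero hπ0).of_flat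
  have hmaxϖ : (Ideal.span {ϖ}).IsMaximal := Ideal.Quotient.maximal_of_isField _ hfield
  have hloc : IsLocalRing B := isLocalRing_of_isAdicComplete_maximal (Ideal.span {ϖ})
  have hmax : maximalIdeal B = Ideal.span {ϖ} := (eq_maximalIdeal hmaxϖ).symm
  have hdom : IsDomain B := isDomain_of_maximalIdeal_eq_span hmax hreg
  have hdvr : IsDiscreteValuationRing B :=
    isDiscreteValuationRing_of_maximalIdeal_eq_span hmax hreg.ne_zero
  have hfrac : IsFractionRing B (Localization.Away ϖ) :=
    hdvr.isFractionRing_of_isLocalization_away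
      (IsDiscreteValuationRing.irreducible_of_span_eq_maximalIdeal ϖ hreg.ne_zero hmax) _
  exact ⟨hdom, hloc, hdvr, hmax, (IsFractionRing.toField B).toIsField, hfrac⟩
end

section
/- Let A be a discrete valuation ring with maximal ideal m, and let A′ be a discrete valuation ring with maximal ideal m′, equipped with an A-algebra structure making A′ a finite free A-module, and such that m·A′ ⊆ m′ and m′^e ⊆ m·A′ for some integer e ≥ 1. Let B be a commutative A-algebra that is flat as an A-module and m-adically complete. Then B ⊗_A A′ is flat as an A′-module, m′-adically complete, and its reduction (B ⊗_A A′)/m′(B ⊗_A A′) is canonically isomorphic to (B/mB) ⊗_{A/m} (A′/m′). -/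
/-!
An `A`-basis of `A'` identifies `A' ⊗[A] B` with a finite power of `B` as an `A`-module, so
`A' ⊗[A] B` is `m`-adically complete. Since `m A' ⊆ m'` and `m'^e ⊆ m A'`, the ideals
`m (A' ⊗[A] B)` and `m' (A' ⊗[A] B)` define the same adic topology, hence `m'`-adic completeness.
Flatness is stable under base change, and the reduction is computed by cancelling base change:
`(A' ⊗[A] B) ⧸ m' ≃ (A' ⧸ m') ⊗[A] B ≃ (A' ⧸ m') ⊗[A ⧸ m] ((A ⧸ m) ⊗[A] B)` and
`(A ⧸ m) ⊗[A] B ≃ B ⧸ m B`.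
-/

universe u

open scoped TensorProduct

section

variable {R : Type*} [CommRing R] (I : Ideal R)
  {M N : Type*} [AddCommGroup M] [Module R M] [AddCommGroup N] [Module R N]

theorem IsAdicComplete.of_linearEquiv [IsAdicComplete I M] (e : M ≃ₗ[R] N) :
    IsAdicComplete I N := by
  have hM := AdicCompletion.of_bijective_iff.mpr ‹_›
  have hcomp : ⇑(AdicCompletion.of I N) =
      AdicCompletion.congr I e ∘ AdicCompletion.of I M ∘ e.symm := by
    funext x
    simp [AdicCompletion.map_of]
  rw [← AdicCompletion.of_bijective_iff, hcomp]
  exact (AdicCompletion.congr I e).bijective.comp (hM.comp e.symm.bijective)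

instance IsAdicComplete.pi {ι : Type*} [Finite ι] (M : ι → Type*) [∀ i, AddCommGroup (M i)]
    [∀ i, Module R (M i)] [∀ i, IsAdicComplete I (M i)] : IsAdicComplete I (∀ i, M i) := by
  classical
  have := Fintype.ofFinite ι
  have hpi : Function.Bijective (AdicCompletion.pi I M) := by
    rw [← funext (AdicCompletion.piEquivOfFintype_apply I M)]
    exact (AdicCompletion.piEquivOfFintype I M).bijective
  have hcomp : AdicCompletion.pi I M ∘ AdicCompletion.of I (∀ i, M i) =
      Pi.map fun i ↦ AdicCompletion.of I (M i) := rfl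
  rw [← AdicCompletion.of_bijective_iff, ← Function.Bijective.of_comp_iff' hpi, hcomp]
  exact .piMap fun i ↦ AdicCompletion.of_bijective_iff.mpr inferInstance

theorem IsAdicComplete.tensorProduct_of_free_of_finite [Module.Free R N] [Module.Finite R N]
    [IsAdicComplete I M] : IsAdicComplete I (N ⊗[R] M) :=
  let b := Module.Free.chooseBasis R N
  .of_linearEquiv I <| ((TensorProduct.congr b.repr (LinearEquiv.refl R M)) ≪≫ₗ
      TensorProduct.finsuppScalarLeft R M _ ≪≫ₗ Finsupp.linearEquivFunOnFinite R M _).symm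

theorem IsAdicComplete.of_le_of_pow_le {I J : Ideal R} (hIJ : I ≤ J) (e : ℕ) (hJI : J ^ e ≤ I)
    [IsAdicComplete I M] : IsAdicComplete J M := by
  -- `(e + 1) * n` rather than `e * n`, so that the reindexing dominates `n` even when `e = 0`
  have hcofinal : ∀ n, (J ^ ((e + 1) * n) • ⊤ : Submodule R M) ≤ I ^ n • ⊤ := fun n ↦ by
    refine Submodule.smul_mono_left ?_
    rw [pow_mul]
    exact Ideal.pow_right_mono ((Ideal.pow_le_pow_right e.le_succ).trans hJI) n
  have hle : ∀ n, (I ^ n • ⊤ : Submodule R M) ≤ J ^ n • ⊤ := fun n ↦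
    Submodule.smul_mono_left (Ideal.pow_right_mono hIJ n)
  have hmono : ∀ n, n ≤ (e + 1) * n := fun n ↦ Nat.le_mul_of_pos_left n e.succ_pos
  have : IsHausdorff J M :=
    ⟨fun x hx ↦ IsHausdorff.haus' (I := I) x fun n ↦ (hx _).mono (hcofinal n)⟩
  have : IsPrecomplete J M := ⟨fun {f} hf ↦ by
    obtain ⟨L, hL⟩ := IsPrecomplete.prec' (I := I) (fun n ↦ f ((e + 1) * n)) fun {m n} hmn ↦
      (hf (Nat.mul_le_mul_left _ hmn)).mono (hcofinal m)
    exact ⟨L, fun n ↦ (hf (hmono n)).trans ((hL n).mono (hle n))⟩⟩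
  exact {}

end

namespace Algebra.TensorProduct

variable {R S B : Type*} [CommRing R] [CommRing S] [CommRing B] [Algebra R S] [Algebra R B]

/- `quotIdealMapEquivQuotTensor` is stated for the instance
`Ideal.Quotient.algebraQuotientMapQuotient`, whose `smul` is not definitionally that of
`(Ideal.quotientMap _ _ _).toAlgebra`; this version accepts any `R ⧸ p`-algebra structure
compatible with `R`. -/
noncomputable def quotIdealMapEquivQuotTensorOfIsScalarTower (p : Ideal R)
    [Algebra (R ⧸ p) (B ⧸ p.map (algebraMap R B))]
    [IsScalarTower R (R ⧸ p) (B ⧸ p.map (algebraMap R B))] :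
    (B ⧸ p.map (algebraMap R B)) ≃ₐ[R ⧸ p] (R ⧸ p) ⊗[R] B :=
  .extendScalarsOfSurjective Ideal.Quotient.mk_surjective <|
    ((quotIdealMapEquivTensorQuot B p).restrictScalars R).trans
      (Algebra.TensorProduct.comm R B (R ⧸ p))

noncomputable def quotientMapEquivQuotientTensorQuotient (p : Ideal R) (P : Ideal S)
    [Algebra (R ⧸ p) (S ⧸ P)] [IsScalarTower R (R ⧸ p) (S ⧸ P)]
    [Algebra (R ⧸ p) (B ⧸ p.map (algebraMap R B))]
    [IsScalarTower R (R ⧸ p) (B ⧸ p.map (algebraMap R B))] :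
    ((S ⊗[R] B) ⧸ P.map (algebraMap S (S ⊗[R] B))) ≃+*
      (B ⧸ p.map (algebraMap R B)) ⊗[R ⧸ p] (S ⧸ P) :=
  (quotientTensorEquiv (R := R) R B S P).symm.toRingEquiv.trans <|
    ((cancelBaseChange R (R ⧸ p) (R ⧸ p) (S ⧸ P) B).symm.trans <|
      (congr AlgEquiv.refl (quotIdealMapEquivQuotTensorOfIsScalarTower p).symm).trans <|
        Algebra.TensorProduct.comm (R ⧸ p) _ _).toRingEquiv

end Algebra.TensorProduct

theorem baseChange_of_complete_flat_dvr_general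
    (A A' : Type u) [CommRing A] [CommRing A'] [IsDomain A] [IsDomain A']
    [IsDiscreteValuationRing A] [IsDiscreteValuationRing A']
    [Algebra A A'] [Module.Finite A A'] [Module.Free A A']
    (h1 : (IsLocalRing.maximalIdeal A).map (algebraMap A A') ≤ IsLocalRing.maximalIdeal A')
    (e : ℕ)
    (h2 : IsLocalRing.maximalIdeal A' ^ e ≤
      (IsLocalRing.maximalIdeal A).map (algebraMap A A'))
    (B : Type u) [CommRing B] [Algebra A B] [Module.Flat A B]
    [IsAdicComplete (IsLocalRing.maximalIdeal A) B] :
    letI : Algebra (A ⧸ IsLocalRing.maximalIdeal A)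
        (B ⧸ (IsLocalRing.maximalIdeal A).map (algebraMap A B)) :=
      (Ideal.quotientMap _ (algebraMap A B) Ideal.le_comap_map).toAlgebra
    letI : Algebra (A ⧸ IsLocalRing.maximalIdeal A) (A' ⧸ IsLocalRing.maximalIdeal A') :=
      (Ideal.quotientMap _ (algebraMap A A') (Ideal.map_le_iff_le_comap.mp h1)).toAlgebra
    Module.Flat A' (A' ⊗[A] B) ∧
    IsAdicComplete ((IsLocalRing.maximalIdeal A').map (algebraMap A' (A' ⊗[A] B)))
      (A' ⊗[A] B) ∧
    Nonempty
      (((A' ⊗[A] B) ⧸ (IsLocalRing.maximalIdeal A').map (algebraMap A' (A' ⊗[A] B))) ≃+*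
        ((B ⧸ (IsLocalRing.maximalIdeal A).map (algebraMap A B)) ⊗[A ⧸ IsLocalRing.maximalIdeal A]
          (A' ⧸ IsLocalRing.maximalIdeal A'))) := by
  let : Algebra (A ⧸ IsLocalRing.maximalIdeal A)
      (B ⧸ (IsLocalRing.maximalIdeal A).map (algebraMap A B)) :=
    (Ideal.quotientMap _ (algebraMap A B) Ideal.le_comap_map).toAlgebra
  let : Algebra (A ⧸ IsLocalRing.maximalIdeal A) (A' ⧸ IsLocalRing.maximalIdeal A') :=
    (Ideal.quotientMap _ (algebraMap A A') (Ideal.map_le_iff_le_comap.mp h1)).toAlgebra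
  have : IsScalarTower A (A ⧸ IsLocalRing.maximalIdeal A)
      (B ⧸ (IsLocalRing.maximalIdeal A).map (algebraMap A B)) :=
    .of_algebraMap_eq fun _ ↦ rfl
  have : IsScalarTower A (A ⧸ IsLocalRing.maximalIdeal A) (A' ⧸ IsLocalRing.maximalIdeal A') :=
    .of_algebraMap_eq fun _ ↦ rfl
  have : IsAdicComplete ((IsLocalRing.maximalIdeal A).map (algebraMap A (A' ⊗[A] B)))
      (A' ⊗[A] B) :=
    (IsAdicComplete.map_algebraMap_iff _ _).mpr (.tensorProduct_of_free_of_finite _)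
  have htower : algebraMap A (A' ⊗[A] B) = (algebraMap A' (A' ⊗[A] B)).comp (algebraMap A A') :=
    IsScalarTower.algebraMap_eq _ _ _
  have hle : (IsLocalRing.maximalIdeal A).map (algebraMap A (A' ⊗[A] B)) ≤
      (IsLocalRing.maximalIdeal A').map (algebraMap A' (A' ⊗[A] B)) := by
    rw [htower, ← Ideal.map_map]
    exact Ideal.map_mono h1
  have hpow : (IsLocalRing.maximalIdeal A').map (algebraMap A' (A' ⊗[A] B)) ^ e ≤
      (IsLocalRing.maximalIdeal A).map (algebraMap A (A' ⊗[A] B)) := by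
    rw [htower, ← Ideal.map_map, ← Ideal.map_pow]
    exact Ideal.map_mono h2
  exact ⟨inferInstance, .of_le_of_pow_le hle e hpow,
    ⟨Algebra.TensorProduct.quotientMapEquivQuotientTensorQuotient _ _⟩⟩

/-- Let `A ⊆ A'` be discrete valuation rings with maximal ideals `m`,
`m'`, with `A'` finite free as an `A`-module, `m·A' ⊆ m'` and `m'^e ⊆ m·A'` for some
`e ≥ 1`.  Let `B` be a flat, `m`-adically complete commutative `A`-algebra.  Then the base
change `A' ⊗[A] B` is flat as an `A'`-module, `m'`-adically complete, and its reduction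
modulo `m'` is canonically isomorphic to `(B/mB) ⊗[A/m] (A'/m')`. -/
theorem baseChange_of_complete_flat_dvr
    (A A' : Type u) [CommRing A] [CommRing A'] [IsDomain A] [IsDomain A']
    [IsDiscreteValuationRing A] [IsDiscreteValuationRing A']
    [Algebra A A'] [Module.Finite A A'] [Module.Free A A']
    (h1 : (IsLocalRing.maximalIdeal A).map (algebraMap A A') ≤ IsLocalRing.maximalIdeal A')
    (e : ℕ) (he : 1 ≤ e)
    (h2 : IsLocalRing.maximalIdeal A' ^ e ≤
      (IsLocalRing.maximalIdeal A).map (algebraMap A A'))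
    (B : Type u) [CommRing B] [Algebra A B] [Module.Flat A B]
    [IsAdicComplete (IsLocalRing.maximalIdeal A) B] :
    letI : Algebra (A ⧸ IsLocalRing.maximalIdeal A)
        (B ⧸ (IsLocalRing.maximalIdeal A).map (algebraMap A B)) :=
      (Ideal.quotientMap _ (algebraMap A B) Ideal.le_comap_map).toAlgebra
    letI : Algebra (A ⧸ IsLocalRing.maximalIdeal A) (A' ⧸ IsLocalRing.maximalIdeal A') :=
      (Ideal.quotientMap _ (algebraMap A A') (Ideal.map_le_iff_le_comap.mp h1)).toAlgebra
    Module.Flat A' (A' ⊗[A] B) ∧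
    IsAdicComplete ((IsLocalRing.maximalIdeal A').map (algebraMap A' (A' ⊗[A] B)))
      (A' ⊗[A] B) ∧
    Nonempty
      (((A' ⊗[A] B) ⧸ (IsLocalRing.maximalIdeal A').map (algebraMap A' (A' ⊗[A] B))) ≃+*
        ((B ⧸ (IsLocalRing.maximalIdeal A).map (algebraMap A B)) ⊗[A ⧸ IsLocalRing.maximalIdeal A]
          (A' ⧸ IsLocalRing.maximalIdeal A'))) :=
  baseChange_of_complete_flat_dvr_general A A' h1 e h2 B
end

section
/- Let p be a prime, k a reduced commutative ring of characteristic p, and R a commutative k-algebra that is flat as a k-module and relatively perfect over k. Then R is reduced. -/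
/-!
If `x ^ p = 0` in `R`, the relative Frobenius `w : R → R ⊗[k] k`, characterised by
`w (x ^ p) = x ⊗ 1`, shows that `x ⊗ 1 = 0`. Since `k` is reduced, its Frobenius is injective,
and tensoring it with the flat module `R` keeps it injective, so `x ↦ x ⊗ 1` is injective and
`x = 0`. A ring in which `x ^ p = 0` forces `x = 0` is reduced.
-/

universe u v

/-- A commutative `k`-algebra `R` (with `k` of characteristic `p`) is *relatively perfect*
over `k` if the commutative square whose vertical arrows are the structure map `k → R`
and whose horizontal arrows are the Frobenius ring endomorphisms `a ↦ a ^ p` of `k` and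
of `R` is a pushout (cocartesian) square of commutative rings.  We encode the pushout
property by its universal property: for every commutative ring `T` and ring homomorphisms
`u : k → T`, `v : R → T` with `v ∘ (k → R) = u ∘ Frob_k`, there is a unique ring
homomorphism `w : R → T` with `w ∘ Frob_R = v` and `w ∘ (k → R) = u`. -/
def IsRelativelyPerfect (p : ℕ) (k : Type u) (R : Type v) [CommRing k] [CommRing R]
    [Algebra k R] : Prop :=
  ∀ (T : Type max u v) [CommRing T] (u' : k →+* T) (v' : R →+* T),
    (∀ a : k, v' (algebraMap k R a) = u' (a ^ p)) →
      ∃! w : R →+* T, (∀ x : R, w (x ^ p) = v' x) ∧ ∀ a : k, w (algebraMap k R a) = u' a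

open TensorProduct

/-- `k`, regarded as a `k`-algebra through its Frobenius `a ↦ a ^ p`. -/
def FrobTwist (_p : ℕ) (k : Type u) : Type u := k

namespace FrobTwist

variable (p : ℕ) (k : Type u) [CommRing k]

instance : CommRing (FrobTwist p k) := inferInstanceAs (CommRing k)

def ofHom : k →+* FrobTwist p k := RingHom.id k

variable [ExpChar k p]

noncomputable instance : Algebra k (FrobTwist p k) :=
  ((ofHom p k).comp (frobenius k p)).toAlgebra

theorem algebraMap_injective [IsReduced k] : Function.Injective (algebraMap k (FrobTwist p k)) :=
  frobenius_inj k p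

end FrobTwist

namespace IsRelativelyPerfect

variable {p : ℕ} {k : Type u} {R : Type v} [CommRing k] [CommRing R] [Algebra k R]

theorem map_eq_zero_of_pow_eq_zero (hRP : IsRelativelyPerfect p k R) {T : Type max u v}
    [CommRing T] (u' : k →+* T) (v' : R →+* T)
    (hcomm : ∀ a : k, v' (algebraMap k R a) = u' (a ^ p)) {x : R} (hx : x ^ p = 0) :
    v' x = 0 := by
  obtain ⟨w, ⟨hw, -⟩, -⟩ := hRP T u' v' hcomm
  rw [← hw, hx, map_zero]

theorem eq_zero_of_pow_eq_zero [ExpChar k p] [IsReduced k] [Module.Flat k R]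
    (hRP : IsRelativelyPerfect p k R) {x : R} (hx : x ^ p = 0) : x = 0 := by
  let v' : R →+* R ⊗[k] FrobTwist p k := Algebra.TensorProduct.includeLeftRingHom
  let u' : k →+* R ⊗[k] FrobTwist p k :=
    Algebra.TensorProduct.includeRight.toRingHom.comp (FrobTwist.ofHom p k)
  have hcomm (a : k) : v' (algebraMap k R a) = u' (a ^ p) :=
    ((Algebra.TensorProduct.includeLeft (S := k)).commutes a).trans
      (Algebra.TensorProduct.includeRight.commutes a).symm
  have hv'_injective : Function.Injective v' :=
    Algebra.TensorProduct.includeLeft_injective (S := k) (FrobTwist.algebraMap_injective p k)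
  exact hv'_injective <| by
    rw [map_zero]
    exact hRP.map_eq_zero_of_pow_eq_zero u' v' hcomm hx

end IsRelativelyPerfect

/-- Let `p` be a prime, `k` a reduced commutative ring of characteristic
`p`, and `R` a commutative `k`-algebra that is flat as a `k`-module and relatively perfect
over `k`. Then `R` is reduced. -/
theorem isReduced_of_relativelyPerfect_flat
    (p : ℕ) (hp : p.Prime) (k : Type u) (R : Type v) [CommRing k] [CommRing R]
    [Algebra k R] [CharP k p] [IsReduced k] [Module.Flat k R]
    (hRP : IsRelativelyPerfect p k R) : IsReduced R := by
  have : Fact p.Prime := ⟨hp⟩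
  exact (isReduced_iff_pow_one_lt p hp.one_lt).2 fun _ ↦ hRP.eq_zero_of_pow_eq_zero
end

section
/- Let Γ be a finite group, H ≤ Γ a subgroup, and M a finite abelian group equipped with an action of Γ by group automorphisms, such that the index [Γ:H] is coprime to the order of M. Let C be the abelian group of functions f : Γ → M satisfying f(h·g) = h•f(g) for all h ∈ H and g ∈ Γ, with pointwise addition, equipped with the Γ-action (γ•f)(g) = f(g·γ). Then the map u : M → C defined by u(m)(g) = g•m is an injective Γ-equivariant group homomorphism, and there exists a Γ-equivariant group homomorphism r : C → M with r ∘ u = id_M; in particular u is a split monomorphism of Γ-modules. -/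
universe u v

variable (Γ : Type u) [Group Γ] (H : Subgroup Γ)
variable (M : Type v) [AddCommGroup M] [DistribMulAction Γ M]

/-- The abelian group `C` of functions `f : Γ → M` satisfying `f (h * g) = h • f g` for
all `h ∈ H` and `g ∈ Γ`, with pointwise addition. -/
def coinducedModule : AddSubgroup (Γ → M) where
  carrier := {f | ∀ h ∈ H, ∀ g : Γ, f (h * g) = h • f g}
  zero_mem' := by
    intro h hh g
    simp
  add_mem' := by
    intro f₁ f₂ h₁ h₂ h hh g
    simp only [Pi.add_apply, h₁ h hh g, h₂ h hh g, smul_add]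
  neg_mem' := by
    intro f hf h hh g
    simp only [Pi.neg_apply, hf h hh g, smul_neg]

/-- The action of `Γ` on `C`, given by `(γ • f) g = f (g * γ)`. -/
instance : SMul Γ (coinducedModule Γ H M) :=
  ⟨fun γ F =>
    ⟨fun g => (F : Γ → M) (g * γ), by
      intro h hh g
      have := F.2 h hh (g * γ)
      simpa [mul_assoc] using this⟩⟩

/-- The map `u : M → C`, `u m g = g • m`. -/
def coinducedUnit : M →+ coinducedModule Γ H M where
  toFun m :=
    ⟨fun g => g • m, by
      intro h hh g
      simp only
      rw [mul_smul]⟩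
  map_zero' := Subtype.ext <| funext fun g => by simp
  map_add' m m' := Subtype.ext <| funext fun g => by simp [smul_add]

/-!
The trace `F ↦ ∑_{gH ∈ Γ/H} g • F g⁻¹` is well defined because `F (h * g) = h • F g` for
`h ∈ H`, is `Γ`-equivariant because `Γ` permutes the cosets, and sends `u m` to `[Γ:H] • m`.
Since `[Γ:H]` is invertible modulo the order of `M`, dividing the trace by `[Γ:H]` gives an
equivariant left inverse of `u`.
-/

variable {Γ H M}

namespace coinducedModule

theorem smul_apply (γ : Γ) (F : coinducedModule Γ H M) (g : Γ) :
    ((γ • F : coinducedModule Γ H M) : Γ → M) g = (F : Γ → M) (g * γ) :=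
  rfl

def twistedEval (g : Γ) : coinducedModule Γ H M →+ M :=
  (DistribSMul.toAddMonoidHom M g).comp
    ((Pi.evalAddMonoidHom (fun _ : Γ => M) g⁻¹).comp (coinducedModule Γ H M).subtype)

theorem twistedEval_apply (g : Γ) (F : coinducedModule Γ H M) :
    twistedEval g F = g • (F : Γ → M) g⁻¹ :=
  rfl

theorem twistedEval_mul_of_mem (g : Γ) {h : Γ} (hh : h ∈ H) :
    twistedEval (H := H) (M := M) (g * h) = twistedEval g := by
  ext F
  rw [twistedEval_apply, twistedEval_apply, mul_inv_rev, F.2 _ (inv_mem hh), ← mul_smul,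
    mul_inv_cancel_right]

def cosetEval (x : Γ ⧸ H) : coinducedModule Γ H M →+ M :=
  Quotient.liftOn' x twistedEval fun g g' hgg' => by
    rw [QuotientGroup.leftRel_apply] at hgg'
    simpa using (twistedEval_mul_of_mem g hgg').symm

theorem cosetEval_mk (g : Γ) : cosetEval (g : Γ ⧸ H) = twistedEval (M := M) g :=
  rfl

theorem cosetEval_smul (x : Γ ⧸ H) (γ : Γ) (F : coinducedModule Γ H M) :
    cosetEval x (γ • F) = γ • cosetEval (γ⁻¹ • x) F := by
  induction x using QuotientGroup.induction_on with
  | H g =>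
    rw [MulAction.Quotient.smul_coe, cosetEval_mk, cosetEval_mk, twistedEval_apply,
      twistedEval_apply, smul_apply, ← mul_smul, smul_eq_mul, mul_inv_rev, inv_inv,
      mul_inv_cancel_left]

variable [Fintype (Γ ⧸ H)]

def trace : coinducedModule Γ H M →+ M :=
  ∑ x : Γ ⧸ H, cosetEval x

theorem trace_apply (F : coinducedModule Γ H M) :
    trace F = ∑ x : Γ ⧸ H, cosetEval x F :=
  AddMonoidHom.finsetSum_apply _ _ _

theorem trace_smul (γ : Γ) (F : coinducedModule Γ H M) : trace (γ • F) = γ • trace F := by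
  rw [trace_apply, trace_apply, Finset.smul_sum]
  simp_rw [cosetEval_smul]
  exact Fintype.sum_equiv (MulAction.toPerm γ⁻¹) _ _ fun _ => rfl

theorem trace_coinducedUnit (m : M) : trace (coinducedUnit Γ H M m) = H.index • m := by
  have hterm (x : Γ ⧸ H) : cosetEval x (coinducedUnit Γ H M m) = m := by
    induction x using QuotientGroup.induction_on with
    | H g => exact smul_inv_smul g m
  rw [trace_apply, Finset.sum_congr rfl fun x _ => hterm x, Finset.sum_const, Finset.card_univ,
    ← Nat.card_eq_fintype_card, ← Subgroup.index_eq_card]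

/-- `(n⁻¹ : ZMod (Nat.card M)).val` inverts `n • ·` on `M` when `n` is prime to `Nat.card M`. -/
noncomputable def retraction : coinducedModule Γ H M →+ M :=
  (H.index⁻¹ : ZMod (Nat.card M)).val • trace

theorem retraction_smul (γ : Γ) (F : coinducedModule Γ H M) :
    retraction (γ • F) = γ • retraction F := by
  rw [retraction, AddMonoidHom.nsmul_apply, AddMonoidHom.nsmul_apply, trace_smul, smul_comm]

theorem retraction_coinducedUnit (hcop : Nat.Coprime H.index (Nat.card M)) (m : M) :
    retraction (coinducedUnit Γ H M m) = m := by
  rw [retraction, AddMonoidHom.nsmul_apply, trace_coinducedUnit]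
  exact zmod_val_inv_nsmul_nsmul hcop.symm m

end coinducedModule

theorem coinducedUnit_smul (γ : Γ) (m : M) :
    coinducedUnit Γ H M (γ • m) = γ • coinducedUnit Γ H M m :=
  Subtype.ext <| funext fun g => (mul_smul g γ m).symm

theorem coinducedUnit_splits_general
    [Finite Γ] (hcop : Nat.Coprime H.index (Nat.card M)) :
    Function.Injective (coinducedUnit Γ H M) ∧
    (∀ (γ : Γ) (m : M), coinducedUnit Γ H M (γ • m) = γ • coinducedUnit Γ H M m) ∧
    ∃ r : coinducedModule Γ H M →+ M,
      (∀ (γ : Γ) (F : coinducedModule Γ H M), r (γ • F) = γ • r F) ∧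
      ∀ m : M, r (coinducedUnit Γ H M m) = m := by
  have := Fintype.ofFinite (Γ ⧸ H)
  have hret : Function.LeftInverse coinducedModule.retraction (coinducedUnit Γ H M) :=
    coinducedModule.retraction_coinducedUnit hcop
  exact ⟨hret.injective, coinducedUnit_smul, _, coinducedModule.retraction_smul, hret⟩

/-- Let `Γ` be a finite group, `H ≤ Γ` a subgroup, and `M` a finite
abelian group with a `Γ`-action by automorphisms, such that the index `[Γ:H]` is coprime
to the order of `M`.  Then the map `u : M → C`, `u m g = g • m`, is an injective
`Γ`-equivariant group homomorphism, and there is a `Γ`-equivariant group homomorphism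
`r : C → M` with `r ∘ u = id`; in particular `u` is a split monomorphism of
`Γ`-modules. -/
theorem coinducedUnit_splits
    [Finite Γ] [Finite M] (hcop : Nat.Coprime H.index (Nat.card M)) :
    Function.Injective (coinducedUnit Γ H M) ∧
    (∀ (γ : Γ) (m : M), coinducedUnit Γ H M (γ • m) = γ • coinducedUnit Γ H M m) ∧
    ∃ r : coinducedModule Γ H M →+ M,
      (∀ (γ : Γ) (F : coinducedModule Γ H M), r (γ • F) = γ • r F) ∧
      ∀ m : M, r (coinducedUnit Γ H M m) = m :=
  coinducedUnit_splits_general hcop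
end

section
/- Let R be a commutative ring and I an ideal of R such that (R, I) is a Henselian pair, and let n ≥ 1 be an integer whose image in R is a unit. Then reduction modulo I induces a bijection from the set {r ∈ R : rⁿ = 1} of n-th roots of unity of R onto the set {s ∈ R/I : sⁿ = 1} of n-th roots of unity of R/I. -/
/-!
Every `n`-th root of unity is a simple root of `X ^ n - 1`, because `n` is a unit. Henselianity
lifts simple roots from `R ⧸ I` to `R`, and the lift is unique: if `a` is a simple root of `f` and
`b` is a root with `b - a` in the Jacobson radical, then
`0 = f b - f a = (b - a) * (f' a + c * (b - a))` and the second factor is a unit.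
-/

open Polynomial

universe u

section

variable {R : Type*} [CommRing R]

def Polynomial.simpleRootSet (f : R[X]) : Set R :=
  {a | f.IsRoot a ∧ IsUnit (f.derivative.eval a)}

theorem Ideal.isUnit_add_of_mem_jacobson_bot {u x : R} (hu : IsUnit u)
    (hx : x ∈ (⊥ : Ideal R).jacobson) : IsUnit (u + x) := by
  have := isLocalHom_of_le_jacobson_bot (⊥ : Ideal R).jacobson le_rfl
  refine isUnit_of_map_unit (Ideal.Quotient.mk (⊥ : Ideal R).jacobson) _ ?_
  rw [map_add, Ideal.Quotient.eq_zero_iff_mem.mpr hx, add_zero]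
  exact hu.map _

theorem Polynomial.eq_of_mem_simpleRootSet_of_sub_mem_jacobson_bot {f : R[X]} {a b : R}
    (ha : a ∈ f.simpleRootSet) (hb : f.IsRoot b) (hab : b - a ∈ (⊥ : Ideal R).jacobson) :
    a = b := by
  obtain ⟨c, hc⟩ := exists_mul_sq_add_linear_part_eq_eval_add f a (b - a)
  have hfactor : (f.derivative.eval a + c * (b - a)) * (b - a) = 0 := by
    rw [add_sub_cancel, hb.eq_zero, ha.1.eq_zero] at hc
    linear_combination hc
  have hunit := Ideal.isUnit_add_of_mem_jacobson_bot ha.2 (Ideal.mul_mem_left _ c hab)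
  rw [eq_comm, ← sub_eq_zero, ← hunit.mul_right_eq_zero, hfactor]

theorem HenselianRing.bijOn_simpleRootSet (I : Ideal R) [HenselianRing R I] {f : R[X]}
    (hf : f.Monic) :
    Set.BijOn (Ideal.Quotient.mk I) f.simpleRootSet
      (f.map (Ideal.Quotient.mk I)).simpleRootSet := by
  refine ⟨?_, ?_, ?_⟩
  · rintro a ⟨ha, hf'⟩
    simp only [simpleRootSet, Set.mem_ofPred_eq, IsRoot, derivative_map, eval_map_apply,
      ha.eq_zero, map_zero]
    exact ⟨trivial, hf'.map _⟩
  · rintro a ha b ⟨hb, -⟩ hab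
    refine eq_of_mem_simpleRootSet_of_sub_mem_jacobson_bot ha hb (HenselianRing.jac (I := I) ?_)
    rwa [← Ideal.Quotient.mk_eq_mk_iff_sub_mem, eq_comm]
  · rintro b ⟨hb, hf'⟩
    obtain ⟨a₀, rfl⟩ := Ideal.Quotient.mk_surjective b
    rw [derivative_map, eval_map_apply] at hf'
    have hroot : f.eval a₀ ∈ I := by
      rwa [IsRoot, eval_map_apply, Ideal.Quotient.eq_zero_iff_mem] at hb
    obtain ⟨a, ha, haa₀⟩ := HenselianRing.is_henselian f hf a₀ hroot hf'
    have hmk : Ideal.Quotient.mk I a = Ideal.Quotient.mk I a₀ :=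
      Ideal.Quotient.mk_eq_mk_iff_sub_mem _ _ |>.mpr haa₀
    have := isLocalHom_of_le_jacobson_bot I HenselianRing.jac
    refine ⟨a, ⟨ha, isUnit_of_map_unit (Ideal.Quotient.mk I) _ ?_⟩, hmk⟩
    rwa [← eval_map_apply, ← derivative_map, hmk, derivative_map, eval_map_apply]

theorem isUnit_derivative_eval_X_pow_sub_one {n : ℕ} (hn : IsUnit (n : R)) {r : R}
    (hr : r ^ n = 1) : IsUnit ((X ^ n - 1 : R[X]).derivative.eval r) := by
  rcases n with _ | n
  · simpa using hn
  · simpa using hn.mul ((IsUnit.of_pow_eq_one hr n.succ_ne_zero).pow n)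

theorem Polynomial.simpleRootSet_X_pow_sub_one {n : ℕ} (hn : IsUnit (n : R)) :
    (X ^ n - 1 : R[X]).simpleRootSet = {r | r ^ n = 1} := by
  ext r
  simp only [simpleRootSet, Set.mem_ofPred_eq, IsRoot, eval_sub, eval_pow, eval_X, eval_one,
    sub_eq_zero]
  exact ⟨And.left, fun hr ↦ ⟨hr, isUnit_derivative_eval_X_pow_sub_one hn hr⟩⟩

end

theorem henselian_bijOn_nthRootsOfUnity_general
    (R : Type u) [CommRing R] (I : Ideal R) [HenselianRing R I]
    (n : ℕ) (hn : IsUnit (n : R)) :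
    Set.BijOn (Ideal.Quotient.mk I) {r : R | r ^ n = 1} {s : R ⧸ I | s ^ n = 1} := by
  have hmonic : (X ^ n - 1 : R[X]).Monic := by
    rcases eq_or_ne n 0 with rfl | hn0
    · have : Subsingleton R := subsingleton_of_zero_eq_one (isUnit_zero_iff.mp (by simpa using hn))
      exact monic_of_subsingleton _
    · simpa using monic_X_pow_sub_C (1 : R) hn0
  have hnI : IsUnit (n : R ⧸ I) := by simpa using hn.map (Ideal.Quotient.mk I)
  rw [← simpleRootSet_X_pow_sub_one hn, ← simpleRootSet_X_pow_sub_one hnI]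
  simpa only [Polynomial.map_sub, Polynomial.map_pow, map_X, Polynomial.map_one] using
    HenselianRing.bijOn_simpleRootSet I hmonic

/-- Let `(R, I)` be a Henselian pair and `n ≥ 1` an integer whose image
in `R` is a unit. Then reduction modulo `I` induces a bijection from the set of `n`-th
roots of unity of `R` onto the set of `n`-th roots of unity of `R/I`. -/
theorem henselian_bijOn_nthRootsOfUnity
    (R : Type u) [CommRing R] (I : Ideal R) [HenselianRing R I]
    (n : ℕ) (hn1 : 1 ≤ n) (hn : IsUnit (n : R)) :
    Set.BijOn (Ideal.Quotient.mk I) {r : R | r ^ n = 1} {s : R ⧸ I | s ^ n = 1} :=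
  henselian_bijOn_nthRootsOfUnity_general R I n hn
end
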